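/- Let Σ be a finite dimensional algebra, and let L^•: 0 → L^s → L^{s+1} → ⋯ → L^t → 0 be a bounded complex of finitely generated Σ-modules each lying in Gproj(Σ)^⊥. If a finitely generated Σ-module M is quasi-isomorphic (in the derived category) to L^•, then M ∈ Gproj(Σ)^⊥, i.e. Ext_Σ^p(U, M) = 0 for all Gorenstein projective U and all p ≥ 1. -/

import Mathlib

/-!
Fix a finitely generated Gorenstein projective `U` with a projective resolution `P`;
`Ext^{≥1}(U, Y) = 0` means that `Hom(P, Y)` is exact in positive degrees. Write `Bʲ ⊆ Zʲ ⊆ Lʲ`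
for the boundaries and cycles of `L`, so that `M ≅ Z⁰ / B⁰`. Below degree `0` the sequences
`0 → Bʲ → Lʲ → Bʲ⁺¹ → 0` are exact, and induction upwards from `s` kills `Ext^{≥1}(U, B⁰)`.
Above degree `0` the sequences `0 → Zʲ → Lʲ → Zʲ⁺¹ → 0` are exact, and induction downwards from
`t` kills `Ext^{≥1}(U, Z⁰)`, provided every map `U → Zʲ⁺¹` lifts to `Lʲ`. That lifting is again a
descending induction: embed `U` into `F = Sⁿ` with finitely generated Gorenstein projective
cokernel `C`, extend `U → Zʲ⁺¹` to `F` using `Ext¹(C, Lʲ⁺¹) = 0`, and correct the extension by a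
lift of the induced map `C → Zʲ⁺²`. Finally use `0 → B⁰ → Z⁰ → M → 0`.

The cosyzygy `C` comes from a complete resolution `Q` of `U ≅ ker (Q⁰ → Q¹)`: the coordinates of
`U → Sⁿ` span the finite dimensional `k`-space `Hom_S(U, S)`, and
`⋯ → Q⁻² → Q⁻¹ → F → F × Q¹ → Q⁰ × Q² → Q³ → ⋯` is a complete resolution with `C` as its cycles
in degree `0`. Its maps exist because over a finite dimensional algebra `S^(K)` is a retract of
`S^K`, so `Hom(-, S)`-exactness of `Q` gives `Hom(-, P)`-exactness for every projective `P`.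
-/

noncomputable section

open scoped TensorProduct
open MulOpposite

section BTensorCore

variable (B : Type) [Ring B]

/-- The balancing relations for the tensor product over `B` of a right `B`-module `M`
and a left `B`-module `N`. -/
def BTrel (M N : Type) [AddCommGroup M] [AddCommGroup N] [Module Bᵐᵒᵖ M] [Module B N] :
    Submodule ℤ (TensorProduct ℤ M N) :=
  Submodule.span ℤ {x | ∃ (m : M) (b : B) (n : N),
    x = (op b • m) ⊗ₜ[ℤ] n - m ⊗ₜ[ℤ] (b • n)}

/-- The balanced tensor product `M ⊗_B N` of a right `B`-module `M` and a left `B`-module `N`,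
realized as a quotient of the tensor product of abelian groups. -/
def BTensor (M N : Type) [AddCommGroup M] [AddCommGroup N] [Module Bᵐᵒᵖ M] [Module B N] : Type :=
  TensorProduct ℤ M N ⧸ BTrel B M N

instance (M N : Type) [AddCommGroup M] [AddCommGroup N] [Module Bᵐᵒᵖ M] [Module B N] :
    AddCommGroup (BTensor B M N) :=
  inferInstanceAs (AddCommGroup (TensorProduct ℤ M N ⧸ BTrel B M N))

variable {M N : Type} [AddCommGroup M] [AddCommGroup N] [Module Bᵐᵒᵖ M] [Module B N]

/-- The class of `m ⊗ n` in `M ⊗_B N`. -/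
def BTensor.tmul (m : M) (n : N) : BTensor B M N :=
  Submodule.Quotient.mk (m ⊗ₜ[ℤ] n)

/-- Functoriality of `M ⊗_B -` in the second (left-module) variable. -/
def BTensor.map₂ (Mfix : Type) [AddCommGroup Mfix] [Module Bᵐᵒᵖ Mfix]
    {N' : Type} [AddCommGroup N'] [Module B N'] (f : N →ₗ[B] N') :
    BTensor B Mfix N →ₗ[ℤ] BTensor B Mfix N' :=
  Submodule.mapQ _ _ (TensorProduct.map LinearMap.id f.toAddMonoidHom.toIntLinearMap) (by
    rw [BTrel, Submodule.span_le]
    rintro x ⟨m, b, n, rfl⟩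
    simp only [SetLike.mem_coe, Submodule.mem_comap, map_sub, TensorProduct.map_tmul,
      LinearMap.id_coe, id_eq, AddMonoidHom.coe_toIntLinearMap, LinearMap.toAddMonoidHom_coe]
    have key : (TensorProduct.map LinearMap.id f.toAddMonoidHom.toIntLinearMap)
        ((op b • m) ⊗ₜ[ℤ] n - m ⊗ₜ[ℤ] (b • n)) = (op b • m) ⊗ₜ[ℤ] f n - m ⊗ₜ[ℤ] (b • f n) := by
      simp
    exact (congrArg (· ∈ BTrel B Mfix N') key).mpr (Submodule.subset_span ⟨m, b, f n, rfl⟩))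

/-- Functoriality of `- ⊗_B N` in the first (right-module) variable. -/
def BTensor.map₁ (Nfix : Type) [AddCommGroup Nfix] [Module B Nfix]
    {M' : Type} [AddCommGroup M'] [Module Bᵐᵒᵖ M'] (g : M →ₗ[Bᵐᵒᵖ] M') :
    BTensor B M Nfix →ₗ[ℤ] BTensor B M' Nfix :=
  Submodule.mapQ _ _ (TensorProduct.map g.toAddMonoidHom.toIntLinearMap LinearMap.id) (by
    rw [BTrel, Submodule.span_le]
    rintro x ⟨m, b, n, rfl⟩
    simp only [SetLike.mem_coe, Submodule.mem_comap, map_sub, TensorProduct.map_tmul,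
      LinearMap.id_coe, id_eq, AddMonoidHom.coe_toIntLinearMap, LinearMap.toAddMonoidHom_coe]
    have key : (TensorProduct.map g.toAddMonoidHom.toIntLinearMap LinearMap.id)
        ((op b • m) ⊗ₜ[ℤ] n - m ⊗ₜ[ℤ] (b • n)) = (op b • g m) ⊗ₜ[ℤ] n - g m ⊗ₜ[ℤ] (b • n) := by
      simp
    exact (congrArg (· ∈ BTrel B M' Nfix) key).mpr (Submodule.subset_span ⟨g m, b, n, rfl⟩))

theorem BTensor.map₂_mk (Mfix : Type) [AddCommGroup Mfix] [Module Bᵐᵒᵖ Mfix]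
    {N' : Type} [AddCommGroup N'] [Module B N'] (f : N →ₗ[B] N') (y : Mfix ⊗[ℤ] N) :
    BTensor.map₂ B Mfix f (Submodule.Quotient.mk y) =
      Submodule.Quotient.mk
        (TensorProduct.map LinearMap.id f.toAddMonoidHom.toIntLinearMap y) :=
  by rfl

theorem BTensor.map₁_mk (Nfix : Type) [AddCommGroup Nfix] [Module B Nfix]
    {M' : Type} [AddCommGroup M'] [Module Bᵐᵒᵖ M'] (g : M →ₗ[Bᵐᵒᵖ] M') (y : M ⊗[ℤ] Nfix) :
    BTensor.map₁ B Nfix g (Submodule.Quotient.mk y) =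
      Submodule.Quotient.mk
        (TensorProduct.map g.toAddMonoidHom.toIntLinearMap LinearMap.id y) :=
  by rfl

end BTensorCore

section LeftRight

variable (B : Type) [Ring B] (Γ : Type) [Ring Γ]
variable (M N : Type) [AddCommGroup M] [AddCommGroup N] [Module Bᵐᵒᵖ M] [Module B N]

section Left
variable [Module Γ M] [SMulCommClass Γ Bᵐᵒᵖ M]

/-- left scalar multiplication on `M`, as a right-`B`-linear map. -/
def lsmulRightLinear (g : Γ) : M →ₗ[Bᵐᵒᵖ] M where
  toFun := (g • ·)
  map_add' := smul_add g
  map_smul' := fun b m => by exact smul_comm g b m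

instance BTensor.instSMulLeft : SMul Γ (BTensor B M N) :=
  ⟨fun g => BTensor.map₁ B N (lsmulRightLinear B Γ M g)⟩

instance BTensor.leftModule : Module Γ (BTensor B M N) := by
  refine Function.Surjective.module Γ
    (⟨⟨(Submodule.Quotient.mk : TensorProduct ℤ M N → BTensor B M N), rfl⟩, fun x y => rfl⟩)
    (Submodule.Quotient.mk_surjective _) ?_
  intro g y
  show Submodule.Quotient.mk (g • y) = BTensor.map₁ B N (lsmulRightLinear B Γ M g)
    (Submodule.Quotient.mk y)
  rw [BTensor.map₁_mk]
  congr 1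

end Left

section Right
variable [Module Γᵐᵒᵖ N] [SMulCommClass B Γᵐᵒᵖ N]

/-- right scalar multiplication on `N`, as a left-`B`-linear map. -/
def rsmulLeftLinear (g : Γᵐᵒᵖ) : N →ₗ[B] N where
  toFun := (g • ·)
  map_add' := smul_add g
  map_smul' := fun b n => by exact (smul_comm b g n).symm

instance BTensor.instSMulRight : SMul Γᵐᵒᵖ (BTensor B M N) :=
  ⟨fun g => BTensor.map₂ B M (rsmulLeftLinear B Γ N g)⟩

instance BTensor.rightModule : Module Γᵐᵒᵖ (BTensor B M N) := by
  refine Function.Surjective.module Γᵐᵒᵖ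
    (⟨⟨fun (y : N ⊗[ℤ] M) => (Submodule.Quotient.mk (TensorProduct.comm ℤ N M y) :
        BTensor B M N), by simp; rfl⟩, fun x y => by simp; rfl⟩) ?_ ?_
  · intro x
    obtain ⟨y, rfl⟩ := Submodule.Quotient.mk_surjective _ x
    exact ⟨(TensorProduct.comm ℤ N M).symm y, by
      show Submodule.Quotient.mk _ = _
      rw [LinearEquiv.apply_symm_apply]⟩
  · intro g y
    show Submodule.Quotient.mk ((TensorProduct.comm ℤ N M) (g • y)) =
      BTensor.map₂ B M (rsmulLeftLinear B Γ N g)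
        (Submodule.Quotient.mk ((TensorProduct.comm ℤ N M) y))
    rw [BTensor.map₂_mk]
    congr 1
    induction y using TensorProduct.induction_on with
    | zero => simp
    | tmul n m =>
        simp [TensorProduct.smul_tmul', rsmulLeftLinear, TensorProduct.comm_tmul]
    | add x y hx hy => simp [smul_add, hx, hy]

end Right

instance BTensor.smulCommClass [Module Γ M] [SMulCommClass Γ Bᵐᵒᵖ M]
    [Module Γᵐᵒᵖ N] [SMulCommClass B Γᵐᵒᵖ N] :
    SMulCommClass Γ Γᵐᵒᵖ (BTensor B M N) := by
  constructor
  intro g og x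
  obtain ⟨y, rfl⟩ := Submodule.Quotient.mk_surjective _ x
  show (BTensor.map₁ B N (lsmulRightLinear B Γ M g)) ((BTensor.map₂ B M (rsmulLeftLinear B Γ N og)) _)
    = (BTensor.map₂ B M (rsmulLeftLinear B Γ N og)) ((BTensor.map₁ B N (lsmulRightLinear B Γ M g)) _)
  rw [BTensor.map₂_mk, BTensor.map₁_mk, BTensor.map₁_mk, BTensor.map₂_mk]
  congr 1
  induction y using TensorProduct.induction_on with
  | zero => simp
  | tmul m n => simp [lsmulRightLinear, rsmulLeftLinear]
  | add x y hx hy => simp [hx, hy]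

end LeftRight

section Bimod

variable (B : Type) [Ring B]

/-- A `B`-`B`-bimodule, packaged. -/
structure BBimod : Type 1 where
  X : Type
  [addcg : AddCommGroup X]
  [left : Module B X]
  [right : Module Bᵐᵒᵖ X]
  [comm : SMulCommClass B Bᵐᵒᵖ X]

attribute [instance] BBimod.addcg BBimod.left BBimod.right BBimod.comm

variable {B}

/-- tensor product of bimodules over `B`. -/
def BBimod.tensor (M N : BBimod B) : BBimod B where
  X := BTensor B M.X N.X

/-- `M.pow j` is the tensor power `M^{⊗_B (j+1)}`. -/
def BBimod.pow (M : BBimod B) : ℕ → BBimod B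
  | 0 => M
  | (j + 1) => M.tensor (M.pow j)

end Bimod

section Tor

variable (R : Type) [Ring R]

/-- `P`, `d`, `ε` form a projective resolution of the left `R`-module `N`. -/
def IsProjResolution (N : Type) [AddCommGroup N] [Module R N]
    (P : ℕ → ModuleCat R) (d : ∀ i, P (i + 1) ⟶ P i) (ε : P 0 ⟶ ModuleCat.of R N) : Prop :=
  (∀ i, Module.Projective R (P i)) ∧ Function.Surjective ε ∧
    LinearMap.range (d 0).hom = LinearMap.ker ε.hom ∧
    ∀ i, LinearMap.range (d (i + 1)).hom = LinearMap.ker (d i).hom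

/-- `Tor_i^R(M, N) = 0` for all `i ≥ 1`: for every projective resolution `P⬝` of `N`, the
complex `M ⊗_R P⬝` is exact in all positive degrees. -/
def TorVanishesPos (M : Type) [AddCommGroup M] [Module Rᵐᵒᵖ M]
    (N : Type) [AddCommGroup N] [Module R N] : Prop :=
  ∀ (P : ℕ → ModuleCat R) (d : ∀ i, P (i + 1) ⟶ P i) (ε : P 0 ⟶ ModuleCat.of R N),
    IsProjResolution R N P d ε →
    ∀ i, LinearMap.range (BTensor.map₂ R M (d (i + 1)).hom) =
      LinearMap.ker (BTensor.map₂ R M (d i).hom)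

end Tor

section ExtGp

variable (R : Type) [Ring R]

/-- `Ext_R^{i+1}(U, Y) = 0`: for every projective resolution of `U`, the induced complex of
`Hom` groups is exact at the spot computing `Ext^{i+1}`. -/
def ExtVanishSucc (U : Type) [AddCommGroup U] [Module R U]
    (Y : Type) [AddCommGroup Y] [Module R Y] (i : ℕ) : Prop :=
  ∀ (P : ℕ → ModuleCat R) (d : ∀ n, P (n + 1) ⟶ P n) (ε : P 0 ⟶ ModuleCat.of R U),
    IsProjResolution R U P d ε →
    ∀ g : P (i + 1) →ₗ[R] Y, g.comp (d (i + 1)).hom = 0 →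
      ∃ h : P i →ₗ[R] Y, h.comp (d i).hom = g

/-- `U` is a Gorenstein projective `R`-module: it is (isomorphic to) a cycle module of a
complete projective resolution, i.e. an exact complex of projectives which stays exact
under `Hom_R(-, R)`. -/
def IsGorensteinProj (U : Type) [AddCommGroup U] [Module R U] : Prop :=
  ∃ (P : ℤ → ModuleCat.{0} R) (d : ∀ i, P i ⟶ P (i + 1)),
    (∀ i, Module.Projective R (P i)) ∧
    (∀ i, LinearMap.range (d i).hom = LinearMap.ker (d (i + 1)).hom) ∧
    (∀ (i : ℤ) (g : P (i + 1) →ₗ[R] R), g.comp (d i).hom = 0 ↔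
      ∃ h : P (i + 1 + 1) →ₗ[R] R, h.comp (d (i + 1)).hom = g) ∧
    Nonempty (U ≃ₗ[R] LinearMap.ker (d 0).hom)

/-- `Y ∈ Gproj(R)^⊥`: `Ext_R^i(U, Y) = 0` for every finitely generated Gorenstein
projective `U` and every `i ≥ 1`. -/
def MemGprojPerp (Y : Type) [AddCommGroup Y] [Module R Y] : Prop :=
  ∀ (U : Type) [AddCommGroup U] [Module R U], Module.Finite R U → IsGorensteinProj R U →
    ∀ i : ℕ, ExtVanishSucc R U Y i

/-- `X ∈ ^⊥R`: `Ext_R^i(X, R) = 0` for all `i ≥ 1`. -/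
def MemPerpRing (X : Type) [AddCommGroup X] [Module R X] : Prop :=
  ∀ i : ℕ, ExtVanishSucc R X R i

/-- projective dimension at most `n`. -/
def pdLE : ℕ → ModuleCat R → Prop
  | 0, M => Module.Projective R M
  | (n + 1), M => ∃ (P : ModuleCat R) (f : P ⟶ M),
      Module.Projective R P ∧ Function.Surjective f ∧ pdLE n (ModuleCat.of R (LinearMap.ker f.hom))

/-- `M` has finite projective dimension over `R`. -/
def HasFinProjDim (M : Type) [AddCommGroup M] [Module R M] : Prop :=
  ∃ n, pdLE R n (ModuleCat.of R M)

end ExtGp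

section Exact

variable {R : Type} [Ring R] {W Y₁ Y₂ Y₃ : Type} [AddCommGroup W] [Module R W]
  [AddCommGroup Y₁] [Module R Y₁] [AddCommGroup Y₂] [Module R Y₂] [AddCommGroup Y₃] [Module R Y₃]

theorem Function.Exact.exists_comp_eq_of_comp_eq_zero {ι : Y₁ →ₗ[R] Y₂} {π : Y₂ →ₗ[R] Y₃}
    (h : Function.Exact ι π) (hι : Function.Injective ι) {f : W →ₗ[R] Y₂} (hf : π ∘ₗ f = 0) :
    ∃ g : W →ₗ[R] Y₁, ι ∘ₗ g = f := by
  have hrange : ∀ x, f x ∈ LinearMap.range ι := fun x => by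
    rw [← h.linearMap_ker_eq, LinearMap.mem_ker, ← LinearMap.comp_apply, hf, LinearMap.zero_apply]
  refine ⟨(LinearEquiv.ofInjective ι hι).symm ∘ₗ f.codRestrict _ hrange, ?_⟩
  ext x
  simp [LinearEquiv.ofInjective_symm_apply]

theorem Function.Exact.exists_comp_eq_of_surjective {f : Y₁ →ₗ[R] Y₂} {g : Y₂ →ₗ[R] Y₃}
    (h : Function.Exact f g) (hg : Function.Surjective g) {k : Y₂ →ₗ[R] W} (hk : k ∘ₗ f = 0) :
    ∃ l : Y₃ →ₗ[R] W, l ∘ₗ g = k := by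
  refine ⟨(LinearMap.range f).liftQ k (LinearMap.range_le_ker_iff.mpr hk) ∘ₗ
    (h.linearEquivOfSurjective hg).symm.toLinearMap, ?_⟩
  ext x
  simp [Function.Exact.linearEquivOfSurjective_symm_apply]

theorem Module.Projective.exists_comp_eq_of_range_le {R P X Y : Type} [Ring R] [AddCommGroup P]
    [Module R P] [Module.Projective R P] [AddCommGroup X] [Module R X] [AddCommGroup Y]
    [Module R Y] (f : X →ₗ[R] Y) (g : P →ₗ[R] Y) (h : LinearMap.range g ≤ LinearMap.range f) :
    ∃ l : P →ₗ[R] X, f ∘ₗ l = g := by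
  obtain ⟨l, hl⟩ := Module.projective_lifting_property f.rangeRestrict
    (g.codRestrict _ fun x => h ⟨x, rfl⟩) f.surjective_rangeRestrict
  exact ⟨l, by ext x; exact congrArg Subtype.val (LinearMap.congr_fun hl x)⟩

end Exact

section Resolution

variable {R : Type} [Ring R]

variable (R) in
def freeSyzygy (N : Type) [AddCommGroup N] [Module R N] : ℕ → ModuleCat.{0} R
  | 0 => ModuleCat.of R N
  | n + 1 => ModuleCat.of R (LinearMap.ker (Finsupp.linearCombination R (id : freeSyzygy N n → _)))

variable (R) in
theorem exists_isProjResolution (N : Type) [AddCommGroup N] [Module R N] :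
    ∃ (P : ℕ → ModuleCat.{0} R) (d : ∀ i, P (i + 1) ⟶ P i) (ε : P 0 ⟶ ModuleCat.of R N),
      IsProjResolution R N P d ε := by
  let π (n : ℕ) : (freeSyzygy R N n →₀ R) →ₗ[R] freeSyzygy R N n :=
    Finsupp.linearCombination R id
  have hπ (n : ℕ) : Function.Surjective (π n) := Finsupp.linearCombination_id_surjective R _
  let d (n : ℕ) := (LinearMap.ker (π n)).subtype ∘ₗ π (n + 1)
  have hrange (n : ℕ) : LinearMap.range (d n) = LinearMap.ker (π n) := by
    ext x
    refine ⟨fun ⟨y, hy⟩ => hy ▸ (π (n + 1) y).2, fun hx => ?_⟩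
    obtain ⟨y, hy⟩ := hπ (n + 1) ⟨x, hx⟩
    exact ⟨y, congrArg Subtype.val hy⟩
  have hker (n : ℕ) : LinearMap.ker (d n) = LinearMap.ker (π (n + 1)) := by
    ext x
    exact Submodule.coe_eq_zero
  refine ⟨fun n => ModuleCat.of R (freeSyzygy R N n →₀ R), fun n => ModuleCat.ofHom (d n),
    ModuleCat.ofHom (π 0), fun _ => Module.Projective.of_free, hπ 0, hrange 0, fun n => ?_⟩
  exact (hrange (n + 1)).trans (hker n).symm

variable {U : Type} [AddCommGroup U] [Module R U] {P : ℕ → ModuleCat.{0} R}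
  {d : ∀ i, P (i + 1) ⟶ P i} {ε : P 0 ⟶ ModuleCat.of R U}

theorem IsProjResolution.d_comp_d (h : IsProjResolution R U P d ε) (i : ℕ) :
    (d i).hom ∘ₗ (d (i + 1)).hom = 0 :=
  LinearMap.range_le_ker_iff.mp (h.2.2.2 i).le

theorem IsProjResolution.ε_comp_d (h : IsProjResolution R U P d ε) : ε.hom ∘ₗ (d 0).hom = 0 :=
  LinearMap.range_le_ker_iff.mp h.2.2.1.le

def consObj (F : ModuleCat.{0} R) (P : ℕ → ModuleCat.{0} R) : ℕ → ModuleCat.{0} R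
  | 0 => F
  | n + 1 => P n

def consHom {F : ModuleCat.{0} R} {P : ℕ → ModuleCat.{0} R} (δ : P 0 ⟶ F)
    (d : ∀ i, P (i + 1) ⟶ P i) : ∀ i, consObj F P (i + 1) ⟶ consObj F P i
  | 0 => δ
  | n + 1 => d n

variable {F C : Type} [AddCommGroup F] [Module R F] [AddCommGroup C] [Module R C]
  {ι : U →ₗ[R] F} {π : F →ₗ[R] C}

theorem IsProjResolution.cons (hres : IsProjResolution R U P d ε) [Module.Projective R F]
    (hι : Function.Injective ι) (hexact : Function.Exact ι π) (hπ : Function.Surjective π) :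
    IsProjResolution R C (consObj (ModuleCat.of R F) P)
      (consHom (ModuleCat.ofHom (ι ∘ₗ ε.hom)) d) (ModuleCat.ofHom π) := by
  refine ⟨fun n => ?_, hπ, ?_, fun n => ?_⟩
  · cases n
    · exact ‹Module.Projective R F›
    · exact hres.1 _
  · show LinearMap.range (ι ∘ₗ ε.hom) = LinearMap.ker π
    rw [LinearMap.range_comp_of_range_eq_top _ (LinearMap.range_eq_top.mpr hres.2.1),
      hexact.linearMap_ker_eq]
  · cases n
    · show LinearMap.range (d 0).hom = LinearMap.ker (ι ∘ₗ ε.hom)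
      rw [LinearMap.ker_comp_of_ker_eq_bot _ (LinearMap.ker_eq_bot.mpr hι)]
      exact hres.2.2.1
    · exact hres.2.2.2 _

theorem ExtVanishSucc.exists_comp_eq {Y : Type} [AddCommGroup Y] [Module R Y]
    (h : ExtVanishSucc R C Y 0) [Module.Projective R F] (hι : Function.Injective ι)
    (hexact : Function.Exact ι π) (hπ : Function.Surjective π) (ψ : U →ₗ[R] Y) :
    ∃ Ψ : F →ₗ[R] Y, Ψ ∘ₗ ι = ψ := by
  obtain ⟨P, d, ε, hres⟩ := exists_isProjResolution R U
  obtain ⟨Ψ, hΨ⟩ := h _ _ _ (hres.cons hι hexact hπ) (ψ ∘ₗ ε.hom)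
    (by
      show (ψ ∘ₗ ε.hom) ∘ₗ (d 0).hom = 0
      rw [LinearMap.comp_assoc, hres.ε_comp_d, LinearMap.comp_zero])
  exact ⟨Ψ, (LinearMap.cancel_right hres.2.1).mp hΨ⟩

end Resolution

section HomAcyclic

variable {R : Type} [Ring R] {U : Type} [AddCommGroup U] [Module R U]
  {P : ℕ → ModuleCat.{0} R} {d : ∀ i, P (i + 1) ⟶ P i} {ε : P 0 ⟶ ModuleCat.of R U}

variable (P d) in
/-- For a projective resolution `P` of `U`, this says `Ext^{≥1}(U, Y) = 0`. -/
def HomAcyclic (Y : Type) [AddCommGroup Y] [Module R Y] : Prop :=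
  ∀ (m : ℕ) (g : P (m + 1) →ₗ[R] Y), g ∘ₗ (d (m + 1)).hom = 0 →
    ∃ h : P m →ₗ[R] Y, h ∘ₗ (d m).hom = g

variable {Y₁ Y₂ Y₃ : Type} [AddCommGroup Y₁] [Module R Y₁] [AddCommGroup Y₂] [Module R Y₂]
  [AddCommGroup Y₃] [Module R Y₃]

theorem HomAcyclic.of_subsingleton [Subsingleton Y₁] : HomAcyclic P d Y₁ :=
  fun _ _ _ => ⟨0, Subsingleton.elim _ _⟩

theorem HomAcyclic.of_linearEquiv (e : Y₁ ≃ₗ[R] Y₂) (h : HomAcyclic P d Y₁) :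
    HomAcyclic P d Y₂ := by
  intro m g hg
  obtain ⟨k, hk⟩ := h m (e.symm.toLinearMap ∘ₗ g)
    (by rw [LinearMap.comp_assoc, hg, LinearMap.comp_zero])
  refine ⟨e.toLinearMap ∘ₗ k, ?_⟩
  rw [LinearMap.comp_assoc, hk, ← LinearMap.comp_assoc, e.comp_symm, LinearMap.id_comp]

theorem HomAcyclic.of_exact_of_surjective (hres : IsProjResolution R U P d ε)
    {ι : Y₁ →ₗ[R] Y₂} {π : Y₂ →ₗ[R] Y₃} (hι : Function.Injective ι) (hexact : Function.Exact ι π)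
    (hπ : Function.Surjective π) (h₁ : HomAcyclic P d Y₁) (h₂ : HomAcyclic P d Y₂) :
    HomAcyclic P d Y₃ := by
  intro m g hg
  have := hres.1 (m + 1)
  obtain ⟨g', hg'⟩ := Module.projective_lifting_property π g hπ
  obtain ⟨a, ha⟩ := hexact.exists_comp_eq_of_comp_eq_zero hι (f := g' ∘ₗ (d (m + 1)).hom)
    (by rw [← LinearMap.comp_assoc, hg', hg])
  have ha' : a ∘ₗ (d (m + 2)).hom = 0 := by
    rw [← LinearMap.cancel_left hι, ← LinearMap.comp_assoc, ha, LinearMap.comp_assoc,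
      hres.d_comp_d, LinearMap.comp_zero, LinearMap.comp_zero]
  obtain ⟨b, hb⟩ := h₁ (m + 1) a ha'
  obtain ⟨c, hc⟩ := h₂ m (g' - ι ∘ₗ b) (by
    rw [LinearMap.sub_comp, LinearMap.comp_assoc, hb, ha, sub_self])
  refine ⟨π ∘ₗ c, ?_⟩
  rw [LinearMap.comp_assoc, hc, LinearMap.comp_sub, hg', ← LinearMap.comp_assoc,
    hexact.linearMap_comp_eq_zero, LinearMap.zero_comp, sub_zero]

theorem HomAcyclic.of_exact_of_injective (hres : IsProjResolution R U P d ε)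
    {ι : Y₁ →ₗ[R] Y₂} {π : Y₂ →ₗ[R] Y₃} (hι : Function.Injective ι) (hexact : Function.Exact ι π)
    (hπ : Function.Surjective π) (h₂ : HomAcyclic P d Y₂) (h₃ : HomAcyclic P d Y₃)
    (hlift : ∀ φ : U →ₗ[R] Y₃, ∃ ψ : U →ₗ[R] Y₂, π ∘ₗ ψ = φ) :
    HomAcyclic P d Y₁ := by
  intro m g hg
  obtain ⟨h, hh⟩ := h₂ m (ι ∘ₗ g) (by rw [LinearMap.comp_assoc, hg, LinearMap.comp_zero])
  have hπh : (π ∘ₗ h) ∘ₗ (d m).hom = 0 := by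
    rw [LinearMap.comp_assoc, hh, ← LinearMap.comp_assoc, hexact.linearMap_comp_eq_zero,
      LinearMap.zero_comp]
  obtain ⟨t, ht, hπt⟩ : ∃ t : P m →ₗ[R] Y₂, t ∘ₗ (d m).hom = 0 ∧ π ∘ₗ t = π ∘ₗ h := by
    cases m with
    -- in degree `0`, `π ∘ h` factors through `ε` and the correction comes from `hlift`
    | zero =>
      obtain ⟨φ, hφ⟩ := (LinearMap.exact_iff.mpr hres.2.2.1.symm).exists_comp_eq_of_surjective
        hres.2.1 hπh
      obtain ⟨ψ, hψ⟩ := hlift φ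
      exact ⟨ψ ∘ₗ ε.hom, by rw [LinearMap.comp_assoc, hres.ε_comp_d, LinearMap.comp_zero],
        by rw [← LinearMap.comp_assoc, hψ, hφ]⟩
    | succ m =>
      obtain ⟨φ, hφ⟩ := h₃ m (π ∘ₗ h) hπh
      have := hres.1 m
      obtain ⟨ψ, hψ⟩ := Module.projective_lifting_property π φ hπ
      exact ⟨ψ ∘ₗ (d m).hom, by rw [LinearMap.comp_assoc, hres.d_comp_d, LinearMap.comp_zero],
        by rw [← LinearMap.comp_assoc, hψ, hφ]⟩
  obtain ⟨k, hk⟩ := hexact.exists_comp_eq_of_comp_eq_zero hι (f := h - t)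
    (by rw [LinearMap.comp_sub, hπt, sub_self])
  refine ⟨k, (LinearMap.cancel_left hι).mp ?_⟩
  rw [← LinearMap.comp_assoc, hk, LinearMap.sub_comp, hh, ht, sub_zero]

end HomAcyclic

section HomExact

variable {S : Type} [Ring S] {W X X' Y : Type} [AddCommGroup W] [Module S W] [AddCommGroup X]
  [Module S X] [AddCommGroup X'] [Module S X'] [AddCommGroup Y] [Module S Y]

def HomExactAt (u : W →ₗ[S] X) (v : X →ₗ[S] X') (Y : Type) [AddCommGroup Y] [Module S Y] :
    Prop :=
  ∀ g : X →ₗ[S] Y, g ∘ₗ u = 0 → ∃ h : X' →ₗ[S] Y, h ∘ₗ v = g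

theorem HomExactAt.comp_surjective {V : Type} [AddCommGroup V] [Module S V] {u : W →ₗ[S] X}
    {v : X →ₗ[S] X'} (h : HomExactAt u v Y) {s : V →ₗ[S] W} (hs : Function.Surjective s) :
    HomExactAt (u ∘ₗ s) v Y := fun g hg =>
  h g (by rwa [← LinearMap.cancel_right hs, LinearMap.zero_comp, LinearMap.comp_assoc])

end HomExact

section CosyzygyMaps

variable {S : Type} [Ring S] {N F Q₀ Q₁ Q₂ Q₃ : Type}
  [AddCommGroup N] [Module S N] [AddCommGroup F] [Module S F] [AddCommGroup Q₀] [Module S Q₀]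
  [AddCommGroup Q₁] [Module S Q₁] [AddCommGroup Q₂] [Module S Q₂] [AddCommGroup Q₃] [Module S Q₃]

-- With `η ∘ i = ι`, `φ ∘ ι = i` and `B ∘ e₀ = 1 - φ ∘ η` for `N ⊆ Q₀` and `ι : N → F`, these are
-- the differentials `F → F × Q₁ → Q₀ × Q₂` of a complete resolution of `F ⧸ N`.
def cosyzygyIncl (η : Q₀ →ₗ[S] F) (φ : F →ₗ[S] Q₀) (e₀ : Q₀ →ₗ[S] Q₁) : F →ₗ[S] F × Q₁ :=
  (LinearMap.id - η ∘ₗ φ).prod (e₀ ∘ₗ φ)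

def cosyzygyDiff (φ : F →ₗ[S] Q₀) (B : Q₁ →ₗ[S] Q₀) (e₁ : Q₁ →ₗ[S] Q₂) :
    F × Q₁ →ₗ[S] Q₀ × Q₂ :=
  (φ ∘ₗ LinearMap.fst S F Q₁ - B ∘ₗ LinearMap.snd S F Q₁).prod (e₁ ∘ₗ LinearMap.snd S F Q₁)

variable {W Q'' Q' Y : Type} [AddCommGroup W] [Module S W] [AddCommGroup Q''] [Module S Q'']
  [AddCommGroup Q'] [Module S Q'] [AddCommGroup Y] [Module S Y]

variable {i : N →ₗ[S] Q₀} {ι : N →ₗ[S] F} {η : Q₀ →ₗ[S] F} {φ : F →ₗ[S] Q₀} {B : Q₁ →ₗ[S] Q₀}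
  {e₀ : Q₀ →ₗ[S] Q₁} {e₁ : Q₁ →ₗ[S] Q₂} {e₂ : Q₂ →ₗ[S] Q₃}

@[simp]
theorem cosyzygyIncl_apply (f : F) : cosyzygyIncl η φ e₀ f = (f - η (φ f), e₀ (φ f)) := rfl

@[simp]
theorem cosyzygyDiff_apply (f : F) (y : Q₁) : cosyzygyDiff φ B e₁ (f, y) = (φ f - B y, e₁ y) :=
  rfl

theorem ker_cosyzygyIncl (hi : Function.Exact i e₀) (hη : η ∘ₗ i = ι) (hφ : φ ∘ₗ ι = i) :
    LinearMap.ker (cosyzygyIncl η φ e₀) = LinearMap.range ι := by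
  ext f
  simp only [LinearMap.mem_ker, LinearMap.mem_range, cosyzygyIncl_apply, Prod.mk_eq_zero,
    sub_eq_zero]
  constructor
  · rintro ⟨hf, hφf⟩
    obtain ⟨n, hn⟩ := (hi _).mp hφf
    exact ⟨n, by rw [hf, ← hn, ← LinearMap.comp_apply, hη]⟩
  · rintro ⟨n, rfl⟩
    rw [← LinearMap.comp_apply φ, hφ, ← LinearMap.comp_apply η, hη]
    exact ⟨rfl, hi.apply_apply_eq_zero n⟩

theorem apply_of_comp_eq_id_sub (hB : B ∘ₗ e₀ = LinearMap.id - φ ∘ₗ η) (x : Q₀) :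
    B (e₀ x) = x - φ (η x) := by
  rw [← LinearMap.comp_apply, hB]; rfl

theorem range_cosyzygyIncl (hexact : Function.Exact e₀ e₁)
    (hB : B ∘ₗ e₀ = LinearMap.id - φ ∘ₗ η) :
    LinearMap.range (cosyzygyIncl η φ e₀) = LinearMap.ker (cosyzygyDiff φ B e₁) := by
  ext ⟨f, y⟩
  simp only [LinearMap.mem_range, LinearMap.mem_ker, cosyzygyDiff_apply, Prod.mk_eq_zero,
    cosyzygyIncl_apply, Prod.mk.injEq]
  constructor
  · rintro ⟨f, rfl, rfl⟩
    rw [apply_of_comp_eq_id_sub hB, map_sub]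
    exact ⟨by abel, hexact.apply_apply_eq_zero _⟩
  · rintro ⟨hf, hy⟩
    obtain ⟨x, rfl⟩ := (hexact y).mp hy
    rw [sub_eq_zero, apply_of_comp_eq_id_sub hB] at hf
    refine ⟨f + η x, ?_, ?_⟩ <;> rw [map_add, hf] <;> abel_nf

theorem range_cosyzygyDiff (hexact : Function.Exact e₁ e₂) (he : e₁ ∘ₗ e₀ = 0)
    (hB : B ∘ₗ e₀ = LinearMap.id - φ ∘ₗ η) :
    LinearMap.range (cosyzygyDiff φ B e₁) = LinearMap.ker (e₂ ∘ₗ LinearMap.snd S Q₀ Q₂) := by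
  ext ⟨z, w⟩
  simp only [LinearMap.mem_range, LinearMap.mem_ker, LinearMap.comp_apply, LinearMap.snd_apply]
  constructor
  · rintro ⟨⟨f, y⟩, h⟩
    rw [cosyzygyDiff_apply, Prod.mk.injEq] at h
    rw [← h.2]
    exact hexact.apply_apply_eq_zero y
  · intro hw
    obtain ⟨y, rfl⟩ := (hexact w).mp hw
    refine ⟨(η (z + B y), y - e₀ (z + B y)), ?_⟩
    rw [cosyzygyDiff_apply, map_sub, apply_of_comp_eq_id_sub hB, map_sub e₁,
      ← LinearMap.comp_apply e₁, he, LinearMap.zero_apply]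
    congr 1 <;> abel

variable {p : Q' →ₗ[S] N} {e' : Q' →ₗ[S] Q₀} {e'' : Q'' →ₗ[S] Q'}

theorem homExactAt_approx_comp (hdual : HomExactAt e'' e' Y) (hp : i ∘ₗ p = e')
    (hext : ∀ ψ : N →ₗ[S] Y, ∃ h : F →ₗ[S] Y, h ∘ₗ ι = ψ) :
    HomExactAt e'' (ι ∘ₗ p) Y := by
  intro g hg
  obtain ⟨h₀, rfl⟩ := hdual g hg
  obtain ⟨h, hh⟩ := hext (h₀ ∘ₗ i)
  exact ⟨h, by rw [← LinearMap.comp_assoc, hh, LinearMap.comp_assoc, hp]⟩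

theorem homExactAt_approx_comp_cosyzygyIncl (hdual : HomExactAt e' e₀ Y) (hp : i ∘ₗ p = e')
    (hpsurj : Function.Surjective p) (hη : η ∘ₗ i = ι) :
    HomExactAt (ι ∘ₗ p) (cosyzygyIncl η φ e₀) Y := by
  intro g hg
  have hgι : g ∘ₗ ι = 0 := by
    rwa [← LinearMap.cancel_right hpsurj, LinearMap.zero_comp, LinearMap.comp_assoc]
  obtain ⟨h, hh⟩ := hdual (g ∘ₗ η) (by
    rw [← hp, ← LinearMap.comp_assoc, LinearMap.comp_assoc i η g, hη, hgι, LinearMap.zero_comp])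
  refine ⟨g ∘ₗ LinearMap.fst S F Q₁ + h ∘ₗ LinearMap.snd S F Q₁, ?_⟩
  ext f
  simp only [LinearMap.add_apply, LinearMap.comp_apply, cosyzygyIncl_apply, LinearMap.fst_apply,
    LinearMap.snd_apply, map_sub]
  rw [← LinearMap.comp_apply h, hh, LinearMap.comp_apply, sub_add_cancel]

theorem homExactAt_cosyzygyIncl_cosyzygyDiff (hdual : HomExactAt e₀ e₁ Y)
    (hB : B ∘ₗ e₀ = LinearMap.id - φ ∘ₗ η) :
    HomExactAt (cosyzygyIncl η φ e₀) (cosyzygyDiff φ B e₁) Y := by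
  intro g hg
  set g₁ := g ∘ₗ LinearMap.inl S F Q₁
  set g₂ := g ∘ₗ LinearMap.inr S F Q₁
  have hg_apply (f : F) (y : Q₁) : g (f, y) = g₁ f + g₂ y := by
    simp [g₁, g₂, ← map_add]
  set h₁ := g₁ ∘ₗ η - g₂ ∘ₗ e₀
  have hh₁ (f : F) : h₁ (φ f) = g₁ f := by
    have := LinearMap.congr_fun hg f
    simp only [LinearMap.comp_apply, cosyzygyIncl_apply, LinearMap.zero_apply, hg_apply,
      map_sub] at this
    simp only [h₁, LinearMap.sub_apply, LinearMap.comp_apply]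
    linear_combination (norm := abel) -this
  obtain ⟨h₂, hh₂⟩ := hdual (g₂ + h₁ ∘ₗ B) (by
    ext x
    simp only [LinearMap.comp_apply, LinearMap.add_apply, apply_of_comp_eq_id_sub hB, map_sub, hh₁,
      LinearMap.zero_apply]
    simp only [h₁, LinearMap.sub_apply, LinearMap.comp_apply]
    abel)
  refine ⟨h₁ ∘ₗ LinearMap.fst S Q₀ Q₂ + h₂ ∘ₗ LinearMap.snd S Q₀ Q₂, ?_⟩
  refine LinearMap.ext fun ⟨f, y⟩ => ?_
  simp only [LinearMap.comp_apply, LinearMap.add_apply, cosyzygyDiff_apply, LinearMap.fst_apply,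
    LinearMap.snd_apply, map_sub, hh₁, hg_apply]
  rw [← LinearMap.comp_apply h₂, hh₂]
  simp only [LinearMap.add_apply, LinearMap.comp_apply]
  abel

theorem homExactAt_comp_snd {u : W →ₗ[S] Q₀ × Q₂}
    (hu : LinearMap.range u = LinearMap.ker (e₂ ∘ₗ LinearMap.snd S Q₀ Q₂))
    (hdual : HomExactAt e₁ e₂ Y) (he : e₂ ∘ₗ e₁ = 0) :
    HomExactAt u (e₂ ∘ₗ LinearMap.snd S Q₀ Q₂) Y := by
  intro g hg
  have hker {z : Q₀} {w : Q₂} (hw : e₂ w = 0) : g (z, w) = 0 := by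
    obtain ⟨x, hx⟩ : (z, w) ∈ LinearMap.range u := hu ▸ hw
    rw [← hx, ← LinearMap.comp_apply, hg, LinearMap.zero_apply]
  obtain ⟨h, hh⟩ := hdual (g ∘ₗ LinearMap.inr S Q₀ Q₂) (by
    ext y
    exact hker (LinearMap.congr_fun he y))
  refine ⟨h, LinearMap.ext fun ⟨z, w⟩ => ?_⟩
  have hsplit : g (z, w) = g (0, w) := by
    rw [← sub_eq_zero, ← map_sub, Prod.mk_sub_mk, sub_zero, sub_self]
    exact hker (map_zero e₂)
  rw [hsplit]
  exact LinearMap.congr_fun hh w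

end CosyzygyMaps

section CompleteResolution

variable {R : Type} [Ring R]

structure IsCompleteResolution (P : ℤ → ModuleCat.{0} R) (d : ∀ i, P i ⟶ P (i + 1)) : Prop where
  projective : ∀ i, Module.Projective R (P i)
  exact : ∀ i, LinearMap.range (d i).hom = LinearMap.ker (d (i + 1)).hom
  homExactAt : ∀ i, HomExactAt (d i).hom (d (i + 1)).hom R

theorem isGorensteinProj_iff {U : Type} [AddCommGroup U] [Module R U] :
    IsGorensteinProj R U ↔ ∃ (P : ℤ → ModuleCat.{0} R) (d : ∀ i, P i ⟶ P (i + 1)),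
      IsCompleteResolution P d ∧ Nonempty (U ≃ₗ[R] LinearMap.ker (d 0).hom) := by
  constructor
  · rintro ⟨P, d, hproj, hexact, hdual, hU⟩
    exact ⟨P, d, ⟨hproj, hexact, fun i g => (hdual i g).mp⟩, hU⟩
  · rintro ⟨P, d, ⟨hproj, hexact, hdual⟩, hU⟩
    refine ⟨P, d, hproj, hexact, fun i g => ⟨hdual i g, ?_⟩, hU⟩
    rintro ⟨h, rfl⟩
    rw [LinearMap.comp_assoc, LinearMap.range_le_ker_iff.mp (hexact i).le, LinearMap.comp_zero]


variable {S : Type} [Ring S]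

-- `⋯ → Q⁻² → Q⁻¹ → F → F × Q¹ → Q⁰ × Q² → Q³ → ⋯`, with `F` in degree `-1`
def cosyzygyObj (F : Type) [AddCommGroup F] [Module S F] (Q : ℤ → ModuleCat.{0} S) :
    ℤ → ModuleCat.{0} S
  | .ofNat 0 => ModuleCat.of S (F × Q 1)
  | .ofNat 1 => ModuleCat.of S (Q 0 × Q 2)
  | .ofNat (n + 2) => Q ((n + 3 : ℕ) : ℤ)
  | .negSucc 0 => ModuleCat.of S F
  | .negSucc (n + 1) => Q (.negSucc n)

def cosyzygyHom {F : Type} [AddCommGroup F] [Module S F] {Q : ℤ → ModuleCat.{0} S}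
    (e : ∀ i, Q i ⟶ Q (i + 1)) (u : Q (-1) →ₗ[S] F) (γ : F →ₗ[S] F × Q 1)
    (δ : F × Q 1 →ₗ[S] Q 0 × Q 2) (ε : Q 0 × Q 2 →ₗ[S] Q 3) :
    ∀ i, cosyzygyObj F Q i ⟶ cosyzygyObj F Q (i + 1)
  | .ofNat 0 => ModuleCat.ofHom δ
  | .ofNat 1 => ModuleCat.ofHom ε
  | .ofNat (n + 2) => e ((n + 3 : ℕ) : ℤ)
  | .negSucc 0 => ModuleCat.ofHom γ
  | .negSucc 1 => ModuleCat.ofHom u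
  | .negSucc (n + 2) => e (.negSucc (n + 1))

variable {Q : ℤ → ModuleCat.{0} S} {e : ∀ i, Q i ⟶ Q (i + 1)} {F : Type} [AddCommGroup F]
  [Module S F] {p : Q (-1) →ₗ[S] LinearMap.ker (e 0).hom} {ι : LinearMap.ker (e 0).hom →ₗ[S] F}
  {η : Q 0 →ₗ[S] F} {φ : F →ₗ[S] Q 0} {B : Q 1 →ₗ[S] Q 0}

theorem IsCompleteResolution.exact' (hQ : IsCompleteResolution Q e) (i : ℤ) :
    Function.Exact (e i).hom (e (i + 1)).hom :=
  LinearMap.exact_iff.mpr (hQ.exact i).symm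

theorem IsCompleteResolution.comp_eq_zero (hQ : IsCompleteResolution Q e) (i : ℤ) :
    (e (i + 1)).hom ∘ₗ (e i).hom = 0 :=
  (hQ.exact' i).linearMap_comp_eq_zero

theorem IsCompleteResolution.projective_cosyzygyObj (hQ : IsCompleteResolution Q e)
    [Module.Projective S F] : ∀ i, Module.Projective S (cosyzygyObj F Q i)
  | .ofNat 0 => have := hQ.projective 1; inferInstanceAs (Module.Projective S (F × Q 1))
  | .ofNat 1 =>
    have := hQ.projective 0
    have := hQ.projective 2
    inferInstanceAs (Module.Projective S (Q 0 × Q 2))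
  | .ofNat (_ + 2) => hQ.projective _
  | .negSucc 0 => inferInstanceAs (Module.Projective S F)
  | .negSucc (_ + 1) => hQ.projective _

theorem isCompleteResolution_cosyzygyHom (hQ : IsCompleteResolution Q e) [Module.Projective S F]
    (hp : (LinearMap.ker (e 0).hom).subtype ∘ₗ p = (e (-1)).hom) (hpsurj : Function.Surjective p)
    (hι : Function.Injective ι) (hext : ∀ ψ : LinearMap.ker (e 0).hom →ₗ[S] S,
      ∃ h : F →ₗ[S] S, h ∘ₗ ι = ψ)
    (hη : η ∘ₗ (LinearMap.ker (e 0).hom).subtype = ι)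
    (hφ : φ ∘ₗ ι = (LinearMap.ker (e 0).hom).subtype)
    (hB : B ∘ₗ (e 0).hom = LinearMap.id - φ ∘ₗ η) :
    IsCompleteResolution (cosyzygyObj F Q) (cosyzygyHom e (ι ∘ₗ p) (cosyzygyIncl η φ (e 0).hom)
      (cosyzygyDiff φ B (e 1).hom) ((e 2).hom ∘ₗ LinearMap.snd S (Q 0) (Q 2))) := by
  have hsub := LinearMap.exact_subtype_ker_map (e 0).hom
  have hrangeδ := range_cosyzygyDiff (hQ.exact' 1) (hQ.comp_eq_zero 0) hB (η := η)
  have hkerιp : LinearMap.ker (ι ∘ₗ p) = LinearMap.ker (e (-1)).hom := by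
    rw [← hp, LinearMap.ker_comp_of_ker_eq_bot _ (LinearMap.ker_eq_bot.mpr hι),
      LinearMap.ker_comp_of_ker_eq_bot _ (Submodule.ker_subtype _)]
  refine ⟨hQ.projective_cosyzygyObj, ?_, ?_⟩
  · rintro ((_ | _ | n) | (_ | _ | _ | n))
    · exact hrangeδ
    · show LinearMap.range ((e 2).hom ∘ₗ LinearMap.snd S (Q 0) (Q 2)) = LinearMap.ker (e 3).hom
      rw [LinearMap.range_comp_of_range_eq_top _
        (LinearMap.range_eq_top.mpr LinearMap.snd_surjective)]
      exact hQ.exact 2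
    · exact hQ.exact _
    · exact range_cosyzygyIncl (hQ.exact' 0) hB
    · show LinearMap.range (ι ∘ₗ p) = LinearMap.ker (cosyzygyIncl η φ (e 0).hom)
      rw [LinearMap.range_comp_of_range_eq_top _ (LinearMap.range_eq_top.mpr hpsurj),
        ker_cosyzygyIncl hsub hη hφ]
    · show LinearMap.range (e (-2)).hom = LinearMap.ker (ι ∘ₗ p)
      rw [hkerιp]
      exact hQ.exact (-2)
    · exact hQ.exact _
  · rintro ((_ | _ | n) | (_ | _ | _ | n))
    · exact homExactAt_comp_snd hrangeδ (hQ.homExactAt 1) (hQ.comp_eq_zero 1)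
    · exact (hQ.homExactAt 2).comp_surjective LinearMap.snd_surjective
    · exact hQ.homExactAt _
    · exact homExactAt_cosyzygyIncl_cosyzygyDiff (hQ.homExactAt 0) hB
    · exact homExactAt_approx_comp_cosyzygyIncl (hQ.homExactAt (-1)) hp hpsurj hη
    · exact (homExactAt_approx_comp (hQ.homExactAt (-2)) hp hext :)
    · exact hQ.homExactAt _

theorem IsCompleteResolution.isGorensteinProj_quotient (hQ : IsCompleteResolution Q e)
    [Module.Projective S F]
    (hp : (LinearMap.ker (e 0).hom).subtype ∘ₗ p = (e (-1)).hom) (hpsurj : Function.Surjective p)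
    (hι : Function.Injective ι) (hext : ∀ ψ : LinearMap.ker (e 0).hom →ₗ[S] S,
      ∃ h : F →ₗ[S] S, h ∘ₗ ι = ψ)
    (hη : η ∘ₗ (LinearMap.ker (e 0).hom).subtype = ι)
    (hφ : φ ∘ₗ ι = (LinearMap.ker (e 0).hom).subtype)
    (hB : B ∘ₗ (e 0).hom = LinearMap.id - φ ∘ₗ η) :
    IsGorensteinProj S (F ⧸ LinearMap.range ι) := by
  have hker := ker_cosyzygyIncl (LinearMap.exact_subtype_ker_map (e 0).hom) hη hφ
  exact isGorensteinProj_iff.mpr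
    ⟨_, _, isCompleteResolution_cosyzygyHom hQ hp hpsurj hι hext hη hφ hB,
      ⟨Submodule.quotEquivOfEq _ _ hker.symm ≪≫ₗ (cosyzygyIncl η φ (e 0).hom).quotKerEquivRange ≪≫ₗ
        LinearEquiv.ofEq _ _ (range_cosyzygyIncl (hQ.exact' 0) hB)⟩⟩

end CompleteResolution

section FiniteDimensionalAlgebra

variable {S : Type} [Ring S]

theorem exists_retraction_finsupp (k : Type) [Field k] [Algebra k S] [FiniteDimensional k S]
    (K : Type) :
    ∃ r : (K → S) →ₗ[S] (K →₀ S), ∀ f : K →₀ S, r f = f := by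
  classical
  set b := Module.finBasis k S
  obtain ⟨ρ, hρ⟩ := LinearMap.exists_leftInverse_of_injective
    (Finsupp.lcoeFun : (K →₀ k) →ₗ[k] K → k)
    (LinearMap.ker_eq_bot.mpr (DFunLike.coe_injective (F := K →₀ k)))
  -- apply `ρ` to each coordinate in the basis `b` of `S` over `k`
  let r : (K → S) →ₗ[k] (K →₀ S) := ∑ j,
    Finsupp.mapRange.linearMap (LinearMap.toSpanSingleton k S (b j)) ∘ₗ
      ρ ∘ₗ LinearMap.compLeft (b.coord j) K
  have hr (F : K → S) (κ : K) : r F κ = ∑ j, ρ (b.coord j ∘ F) κ • b j := by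
    simp [r, Finsupp.finsetSum_apply]
    rfl
  have hnat (T : S →ₗ[k] S) (F : K → S) (κ : K) : r (T ∘ F) κ = T (r F κ) := by
    have hT (x : S) : T x = ∑ i, b.coord i x • T (b i) := by
      conv_lhs => rw [← b.sum_repr x]
      rw [map_sum]
      simp only [map_smul, Module.Basis.coord_apply]
    have hcoord (j) : b.coord j ∘ T ∘ F = ∑ i, b.coord j (T (b i)) • (b.coord i ∘ F) := by
      ext κ'
      simp [hT (F κ'), Finset.sum_apply, mul_comm]
    rw [hr, hr, map_sum]
    simp_rw [hcoord, map_sum, map_smul, Finsupp.finsetSum_apply, Finsupp.smul_apply, smul_eq_mul,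
      Finset.sum_smul, mul_smul]
    rw [Finset.sum_comm]
    refine Finset.sum_congr rfl fun i _ => ?_
    simp_rw [smul_comm (b.coord _ _) (ρ _ κ), ← Finset.smul_sum, Module.Basis.coord_apply,
      b.sum_repr]
  refine ⟨{ r with map_smul' := fun s F => Finsupp.ext (hnat (LinearMap.mulLeft k s) F) }, ?_⟩
  intro f
  ext κ
  have hρf (j) : ρ (b.coord j ∘ f) = f.mapRange (b.coord j) (map_zero _) :=
    LinearMap.congr_fun hρ (f.mapRange (b.coord j) (map_zero _))
  simp [hr, hρf]

theorem HomExactAt.projective (k : Type) [Field k] [Algebra k S] [FiniteDimensional k S]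
    {W X X' : Type} [AddCommGroup W] [Module S W] [AddCommGroup X] [Module S X] [AddCommGroup X']
    [Module S X'] {u : W →ₗ[S] X} {v : X →ₗ[S] X'} (h : HomExactAt u v S)
    (P : Type) [AddCommGroup P] [Module S P] [Module.Projective S P] : HomExactAt u v P := by
  obtain ⟨s, hs⟩ := Module.projective_def.mp ‹Module.Projective S P›
  obtain ⟨r, hr⟩ := exists_retraction_finsupp k (S := S) P
  intro G hG
  -- extend each coordinate of `G` in the free module `P →₀ S`, then retract back
  choose H hH using fun κ : P => h (Finsupp.lapply κ ∘ₗ s ∘ₗ G) (by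
    rw [LinearMap.comp_assoc, LinearMap.comp_assoc, hG, LinearMap.comp_zero, LinearMap.comp_zero])
  refine ⟨Finsupp.linearCombination S id ∘ₗ r ∘ₗ LinearMap.pi H, ?_⟩
  ext x
  have hcoord : LinearMap.pi H (v x) = ⇑(s (G x)) := funext fun κ => LinearMap.congr_fun (hH κ) x
  simp only [LinearMap.comp_apply]
  rw [hcoord, hr]
  exact hs (G x)

theorem exists_injective_approximation (k : Type) [Field k] [Algebra k S]
    [FiniteDimensional k S] (N : Type) [AddCommGroup N] [Module S N] [Module.Finite S N]
    (hN : ∀ x : N, x ≠ 0 → ∃ g : N →ₗ[S] S, g x ≠ 0) :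
    ∃ (n : ℕ) (ι : N →ₗ[S] (Fin n → S)), Function.Injective ι ∧
      ∀ ψ : N →ₗ[S] S, ∃ h : (Fin n → S) →ₗ[S] S, h ∘ₗ ι = ψ := by
  obtain ⟨a, v, hv⟩ := Module.Finite.exists_fin (R := S) (M := N)
  have : FiniteDimensional k (N →ₗ[S] S) := by
    let restrict : (N →ₗ[S] S) →ₗ[k] (Fin a → S) :=
      { toFun := fun f => f ∘ v, map_add' := fun _ _ => rfl, map_smul' := fun _ _ => rfl }
    exact .of_injective restrict fun f g hfg => LinearMap.ext_on_range hv (congrFun hfg)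
  obtain ⟨n, φ, hφ⟩ := Module.Finite.exists_fin (R := k) (M := N →ₗ[S] S)
  have hcomb (ψ : N →ₗ[S] S) : ∃ c : Fin n → k, ∑ i, c i • φ i = ψ :=
    (Submodule.mem_span_range_iff_exists_fun k).mp (hφ ▸ Submodule.mem_top)
  refine ⟨n, LinearMap.pi φ, ?_, fun ψ => ?_⟩
  · refine (injective_iff_map_eq_zero _).mpr fun x hx => by_contra fun hx0 => ?_
    obtain ⟨g, hg⟩ := hN x hx0
    obtain ⟨c, rfl⟩ := hcomb g
    have hφx (i) : φ i x = 0 := congrFun hx i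
    exact hg (by simp [hφx])
  · obtain ⟨c, rfl⟩ := hcomb ψ
    exact ⟨∑ i, c i • LinearMap.proj i, by ext; simp⟩

end FiniteDimensionalAlgebra

section Cosyzygy

variable {S : Type} [Ring S]

theorem IsGorensteinProj.exists_finite_cosyzygy (k : Type) [Field k] [Algebra k S]
    [FiniteDimensional k S] {N : Type} [AddCommGroup N] [Module S N] [Module.Finite S N]
    (hN : IsGorensteinProj S N) :
    ∃ (n : ℕ) (ι : N →ₗ[S] (Fin n → S)), Function.Injective ι ∧
      IsGorensteinProj S ((Fin n → S) ⧸ LinearMap.range ι) := by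
  obtain ⟨Q, e, hQ, ⟨u⟩⟩ := isGorensteinProj_iff.mp hN
  set K := LinearMap.ker (e 0).hom
  have : Module.Finite S K := Module.Finite.equiv u
  have := hQ.projective 0
  have hK (x : K) (hx : x ≠ 0) : ∃ g : K →ₗ[S] S, g x ≠ 0 := by
    obtain ⟨g, hg⟩ := Module.Projective.exists_dual_ne_zero S (x := (x : Q 0))
      (by simpa using hx)
    exact ⟨g ∘ₗ K.subtype, hg⟩
  obtain ⟨n, ι, hι, hext⟩ := exists_injective_approximation k K hK
  set d : Q (-1) →ₗ[S] Q 0 := (e (-1)).hom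
  have hexact : LinearMap.range d = K := hQ.exact (-1)
  have hcomp : d ∘ₗ (e (-2)).hom = 0 := hQ.comp_eq_zero (-2)
  have hdual₂ : HomExactAt (e (-2)).hom d S := hQ.homExactAt (-2)
  have hdual₁ : HomExactAt d (e 0).hom S := hQ.homExactAt (-1)
  set p : Q (-1) →ₗ[S] K := d.codRestrict K fun x => hexact ▸ ⟨x, rfl⟩
  have hp : K.subtype ∘ₗ p = d := rfl
  have hpsurj : Function.Surjective p := by
    rintro ⟨y, hy⟩
    obtain ⟨x, rfl⟩ : y ∈ LinearMap.range d := hexact ▸ hy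
    exact ⟨x, rfl⟩
  have hpe : p ∘ₗ (e (-2)).hom = 0 := by
    rw [← LinearMap.cancel_left K.injective_subtype, ← LinearMap.comp_assoc, hp, hcomp,
      LinearMap.comp_zero]
  have hKext : HomExactAt (0 : K →ₗ[S] K) K.subtype S := by
    intro g _
    obtain ⟨h, hh⟩ := hdual₂ (g ∘ₗ p) (by rw [LinearMap.comp_assoc, hpe, LinearMap.comp_zero])
    exact ⟨h, (LinearMap.cancel_right hpsurj).mp hh⟩
  have hKe : HomExactAt K.subtype (e 0).hom S := fun g hg =>
    hdual₁ g (by rw [← hp, ← LinearMap.comp_assoc, hg, LinearMap.zero_comp])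
  obtain ⟨η, hη⟩ := hKext.projective k (Fin n → S) ι (LinearMap.comp_zero _)
  obtain ⟨φ, hφ⟩ := HomExactAt.projective k (u := (0 : K →ₗ[S] K)) (fun g _ => hext g) (Q 0)
    K.subtype (LinearMap.comp_zero _)
  obtain ⟨B, hB⟩ := hKe.projective k (Q 0) (LinearMap.id - φ ∘ₗ η) (by
    rw [LinearMap.sub_comp, LinearMap.id_comp, LinearMap.comp_assoc, hη, hφ, sub_self])
  refine ⟨n, ι ∘ₗ u.toLinearMap, hι.comp u.injective, ?_⟩
  rw [LinearMap.range_comp_of_range_eq_top _ (LinearMap.range_eq_top.mpr u.surjective)]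
  exact hQ.isGorensteinProj_quotient hp hpsurj hι hext hη hφ hB

end Cosyzygy

section Lift

variable {S : Type} [Ring S] {L : ℤ → ModuleCat.{0} S} {d : ∀ i, L i ⟶ L (i + 1)}

theorem exists_lift_of_isGorensteinProj (k : Type) [Field k] [Algebra k S]
    [FiniteDimensional k S] (hcomplex : ∀ i, (d (i + 1)).hom ∘ₗ (d i).hom = 0) {t : ℤ}
    (hbdd : ∀ i, t < i → Subsingleton (L i)) (hperp : ∀ i, MemGprojPerp S (L i)) (j : ℤ)
    (hexact : ∀ i, j ≤ i → LinearMap.range (d i).hom = LinearMap.ker (d (i + 1)).hom)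
    {N : Type} [AddCommGroup N] [Module S N] [Module.Finite S N] (hN : IsGorensteinProj S N)
    (φ : N →ₗ[S] L (j + 1)) (hφ : (d (j + 1)).hom ∘ₗ φ = 0) :
    ∃ ψ : N →ₗ[S] L j, (d j).hom ∘ₗ ψ = φ := by
  by_cases hj : t ≤ j
  · have := hbdd (j + 1) (by omega)
    exact ⟨0, Subsingleton.elim _ _⟩
  obtain ⟨n, ι, hι, hC⟩ := hN.exists_finite_cosyzygy k
  have hιπ := LinearMap.exact_map_mkQ_range ι
  -- extend `φ` to `Φ : S^n → L (j+1)`, using `Ext¹(S^n / N, L (j+1)) = 0`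
  obtain ⟨Φ, hΦ⟩ := (hperp (j + 1) _ inferInstance hC 0).exists_comp_eq hι hιπ
    (Submodule.mkQ_surjective _) φ
  -- `d ∘ Φ` kills `N`, so comes from `ρ : S^n / N → L (j+2)`, which lifts by induction
  obtain ⟨ρ, hρ⟩ := hιπ.exists_comp_eq_of_surjective (Submodule.mkQ_surjective _)
    (k := (d (j + 1)).hom ∘ₗ Φ) (by rw [LinearMap.comp_assoc, hΦ, hφ])
  obtain ⟨σ, hσ⟩ := exists_lift_of_isGorensteinProj k hcomplex hbdd hperp (j + 1)
    (fun i hi => hexact i (by omega)) hC ρ (by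
      rw [← LinearMap.cancel_right (Submodule.mkQ_surjective _), LinearMap.comp_assoc, hρ,
        ← LinearMap.comp_assoc, hcomplex, LinearMap.zero_comp, LinearMap.zero_comp])
  -- the corrected extension `Φ - σ ∘ mkQ` takes values in the cycles, hence lifts along `d j`
  set Φ' := Φ - σ ∘ₗ (LinearMap.range ι).mkQ
  obtain ⟨Λ, hΛ⟩ := Module.Projective.exists_comp_eq_of_range_le (d j).hom Φ' (by
    rintro _ ⟨x, rfl⟩
    rw [hexact j le_rfl, LinearMap.mem_ker, ← LinearMap.comp_apply, LinearMap.comp_sub,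
      ← LinearMap.comp_assoc, hσ, hρ, sub_self, LinearMap.zero_apply])
  refine ⟨Λ ∘ₗ ι, ?_⟩
  rw [← LinearMap.comp_assoc, hΛ, LinearMap.sub_comp, hΦ, LinearMap.comp_assoc,
    hιπ.linearMap_comp_eq_zero, LinearMap.comp_zero, sub_zero]
termination_by (t - j).toNat
decreasing_by omega

end Lift

section Tails

variable {S : Type} [Ring S] {L : ℤ → ModuleCat.{0} S} {d : ∀ i, L i ⟶ L (i + 1)}
  {U : Type} [AddCommGroup U] [Module S U] {P : ℕ → ModuleCat.{0} S}
  {dP : ∀ i, P (i + 1) ⟶ P i} {ε : P 0 ⟶ ModuleCat.of S U}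

theorem homAcyclic_range (hres : IsProjResolution S U P dP ε) (hL : ∀ i, HomAcyclic P dP (L i))
    {s : ℤ} (hbdd : ∀ i, i < s → Subsingleton (L i)) (i : ℤ)
    (hexact : ∀ m, m < i → LinearMap.range (d m).hom = LinearMap.ker (d (m + 1)).hom) :
    HomAcyclic P dP (LinearMap.range (d i).hom) := by
  have hlow (m : ℤ) (hm : m < s) : HomAcyclic P dP (LinearMap.range (d m).hom) := by
    have := hbdd m hm
    rw [LinearMap.range_eq_bot.mpr (Subsingleton.elim _ _)]
    exact .of_subsingleton
  rcases lt_or_ge i s with hi | hi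
  · exact hlow i hi
  induction i, (show s - 1 ≤ i by omega) using Int.leInduction with
  | base => exact hlow _ (by omega)
  | succ n hn ih =>
    refine .of_exact_of_surjective hres (LinearMap.range (d n).hom).injective_subtype ?_
      (d (n + 1)).hom.surjective_rangeRestrict ?_ (hL (n + 1))
    · rw [LinearMap.exact_iff, LinearMap.ker_rangeRestrict, Submodule.range_subtype,
        hexact n (by omega)]
    · rcases lt_or_ge n s with hns | hns
      · exact hlow n hns
      · exact ih (fun m hm => hexact m (by omega)) hns

theorem homAcyclic_ker (k : Type) [Field k] [Algebra k S] [FiniteDimensional k S]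
    (hres : IsProjResolution S U P dP ε) (hL : ∀ i, HomAcyclic P dP (L i))
    (hcomplex : ∀ i, (d (i + 1)).hom ∘ₗ (d i).hom = 0) {t : ℤ}
    (hbdd : ∀ i, t < i → Subsingleton (L i)) (hperp : ∀ i, MemGprojPerp S (L i))
    [Module.Finite S U] (hU : IsGorensteinProj S U) (j : ℤ)
    (hexact : ∀ i, j ≤ i → LinearMap.range (d i).hom = LinearMap.ker (d (i + 1)).hom) :
    HomAcyclic P dP (LinearMap.ker (d j).hom) := by
  by_cases hj : t ≤ j
  · have := hbdd (j + 1) (by omega)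
    have htop : LinearMap.ker (d j).hom = ⊤ := eq_top_iff.mpr fun x _ => Subsingleton.elim _ _
    exact .of_linearEquiv (LinearEquiv.ofTop _ htop).symm (hL j)
  have hmem (x : L j) : (d j).hom x ∈ LinearMap.ker (d (j + 1)).hom :=
    LinearMap.congr_fun (hcomplex j) x
  set π := (d j).hom.codRestrict _ hmem
  refine .of_exact_of_injective hres (π := π) (LinearMap.ker (d j).hom).injective_subtype ?_ ?_
    (hL j) (homAcyclic_ker k hres hL hcomplex hbdd hperp hU (j + 1)
      fun i hi => hexact i (by omega)) fun φ => ?_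
  · rw [LinearMap.exact_iff, Submodule.range_subtype, LinearMap.ker_codRestrict]
  · rintro ⟨y, hy⟩
    obtain ⟨x, rfl⟩ : y ∈ LinearMap.range (d j).hom := hexact j le_rfl ▸ hy
    exact ⟨x, rfl⟩
  · obtain ⟨ψ, hψ⟩ := exists_lift_of_isGorensteinProj k hcomplex hbdd hperp j hexact hU
      ((LinearMap.ker (d (j + 1)).hom).subtype ∘ₗ φ) (by ext x; exact (φ x).2)
    exact ⟨ψ, by ext x; exact LinearMap.congr_fun hψ x⟩
termination_by (t - j).toNat
decreasing_by omega

end Tails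

theorem statement13_general (k : Type) [Field k] (S : Type) [Ring S] [Algebra k S]
    [FiniteDimensional k S]
    (s t : ℤ) (L : ℤ → ModuleCat.{0} S) (d : ∀ i, L i ⟶ L (i + 1))
    (hcomplex : ∀ i, (d (i + 1)).hom.comp (d i).hom = 0)
    (hbdd : ∀ i, (i < s ∨ t < i) → Subsingleton (L i))
    (hperp : ∀ i, MemGprojPerp S (L i))
    (M : Type) [AddCommGroup M] [Module S M]
    (hH : ∀ i : ℤ, i + 1 ≠ 0 → LinearMap.range (d i).hom = LinearMap.ker (d (i + 1)).hom)
    (hH0 : Nonempty (M ≃ₗ[S] (↥(LinearMap.ker (d 0).hom) ⧸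
      Submodule.comap (LinearMap.ker (d 0).hom).subtype (LinearMap.range (d (-1)).hom)))) :
    MemGprojPerp S M := by
  intro U _ _ hUfg hU n P dP ε hres
  have hL (m : ℤ) : HomAcyclic P dP (L m) := fun j g hg => hperp m U hUfg hU j P dP ε hres g hg
  have hB := homAcyclic_range hres hL (fun i hi => hbdd i (.inl hi)) (-1)
    fun m hm => hH m (by omega)
  have hZ := homAcyclic_ker k hres hL hcomplex (fun i hi => hbdd i (.inr hi)) hperp hU 0
    fun i hi => hH i (by omega)
  set W := Submodule.comap (LinearMap.ker (d 0).hom).subtype (LinearMap.range (d (-1)).hom)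
  have hW : HomAcyclic P dP W := .of_linearEquiv
    (Submodule.comapSubtypeEquivOfLe (LinearMap.range_le_ker_iff.mpr (hcomplex (-1)))).symm hB
  have hM : HomAcyclic P dP M := .of_linearEquiv hH0.some.symm
    (.of_exact_of_surjective hres W.injective_subtype (LinearMap.exact_subtype_mkQ W)
      W.mkQ_surjective hW hZ)
  exact hM n

/-- Let `L⬝ : 0 → L^s → ⋯ → L^t → 0` be a bounded complex of finitely
generated modules all lying in `Gproj(S)^⊥`.  If a finitely generated module `M` is
quasi-isomorphic to `L⬝` (i.e. the homology of `L⬝` is concentrated in degree `0` and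
isomorphic to `M`), then `M ∈ Gproj(S)^⊥`. -/
theorem statement13 (k : Type) [Field k] (S : Type) [Ring S] [Algebra k S]
    [FiniteDimensional k S]
    (s t : ℤ) (L : ℤ → ModuleCat.{0} S) (d : ∀ i, L i ⟶ L (i + 1))
    (hcomplex : ∀ i, (d (i + 1)).hom.comp (d i).hom = 0)
    (hbdd : ∀ i, (i < s ∨ t < i) → Subsingleton (L i))
    (hfg : ∀ i, Module.Finite S (L i))
    (hperp : ∀ i, MemGprojPerp S (L i))
    (M : Type) [AddCommGroup M] [Module S M] (hMfg : Module.Finite S M)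
    (hH : ∀ i : ℤ, i + 1 ≠ 0 → LinearMap.range (d i).hom = LinearMap.ker (d (i + 1)).hom)
    (hH0 : Nonempty (M ≃ₗ[S] (↥(LinearMap.ker (d 0).hom) ⧸
      Submodule.comap (LinearMap.ker (d 0).hom).subtype (LinearMap.range (d (-1)).hom)))) :
    MemGprojPerp S M :=
  statement13_general k S s t L d hcomplex hbdd hperp M hH hH0
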